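/- There exist a constant c > 0 and an integer N such that for all n ≥ N: Â_n ≤ A_n ≤ e^{−c n}, where A_n = Σ_{k integer, 0 ≤ k ≤ n, |k − n/2| ≥ n/4} y_{k,n} and Â_n = Σ_{k integer, 0 ≤ k ≤ n, k − n/2 ≥ n/4} y_{k,n}. -/

import Mathlib

/-- The normalized summand `y_{k,n} = C(n,k) e^{(2k-n)²/(2n)} / (√(2/(πn)) · 2ⁿ)`. -/
noncomputable def ycw (n k : ℕ) : ℝ :=
  (n.choose k : ℝ) * Real.exp ((2 * (k : ℝ) - n) ^ 2 / (2 * n)) /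
    (Real.sqrt (2 / (Real.pi * n)) * 2 ^ n)

/-- `A_n`: sum of `y_{k,n}` over `|k - n/2| ≥ n/4`. -/
noncomputable def Acw (n : ℕ) : ℝ :=
  ∑ k ∈ (Finset.range (n + 1)).filter (fun k : ℕ => (n : ℝ) / 4 ≤ |(k : ℝ) - n / 2|), ycw n k

/-- `Â_n`: sum of `y_{k,n}` over `k - n/2 ≥ n/4`. -/
noncomputable def Ahatcw (n : ℕ) : ℝ :=
  ∑ k ∈ (Finset.range (n + 1)).filter (fun k : ℕ => (n : ℝ) / 4 ≤ (k : ℝ) - n / 2), ycw n k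

/-!
Bounding `C(n,k) ≤ exp (n H(k/n))` by the binomial theorem, with `H` the binary entropy, gives
`y_{k,n} ≤ √(πn/2) · exp (-n D(k/n))` where `D(p) = log 2 - H(p) - 2(p - 1/2)²` is the excess of the
Kullback–Leibler divergence from a fair coin over its Pinsker lower bound. `D` is symmetric about
`1/2` and increasing on `[1/2, 1]`, so on the tails `|p - 1/2| ≥ 1/4` it is at least
`D(3/4) = (3/4) log 3 - log 2 - 1/8 > 0`. Summing at most `n + 1` such terms and absorbing the
polynomial factor into half of the exponential rate gives the claim.
-/
open Real Finset Filter

lemma four_mul_sub_half_le_log_sub_log {p : ℝ} (hp : 2⁻¹ ≤ p) (hp1 : p < 1) :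
    4 * (p - 2⁻¹) ≤ log p - log (1 - p) := by
  have hx : |2 * p - 1| < 1 := abs_lt.mpr ⟨by linarith, by linarith⟩
  -- the right side is `2 artanh (2p - 1)`; keep the first term `2 (2p - 1)` of its series
  have hsum := le_hasSum (hasSum_log_sub_log_of_abs_lt_one hx) 0 fun j _ => by
    have : 0 ≤ 2 * p - 1 := by linarith
    positivity
  have hlog : log (1 + (2 * p - 1)) - log (1 - (2 * p - 1)) = log p - log (1 - p) := by
    rw [show 1 + (2 * p - 1) = 2 * p by ring, show 1 - (2 * p - 1) = 2 * (1 - p) by ring,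
      log_mul two_ne_zero (by linarith), log_mul two_ne_zero (by linarith)]
    ring
  rw [hlog] at hsum
  linarith

noncomputable def pinskerDefect (p : ℝ) : ℝ := log 2 - binEntropy p - 2 * (p - 2⁻¹) ^ 2

lemma pinskerDefect_one_sub (p : ℝ) : pinskerDefect (1 - p) = pinskerDefect p := by
  simp only [pinskerDefect, binEntropy_one_sub]
  ring

lemma hasDerivAt_pinskerDefect {p : ℝ} (h0 : p ≠ 0) (h1 : p ≠ 1) :
    HasDerivAt pinskerDefect (log p - log (1 - p) - 4 * (p - 2⁻¹)) p := by
  have := ((hasDerivAt_binEntropy h0 h1).const_sub (log 2)).sub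
    ((((hasDerivAt_id' p).sub_const 2⁻¹).pow 2).const_mul 2)
  exact this.congr_deriv (by push_cast; ring)

lemma pinskerDefect_monotoneOn : MonotoneOn pinskerDefect (Set.Icc 2⁻¹ 1) := by
  refine monotoneOn_of_hasDerivWithinAt_nonneg (convex_Icc _ _)
    (f' := fun p => log p - log (1 - p) - 4 * (p - 2⁻¹)) (by unfold pinskerDefect; fun_prop)
    (fun p hp => ?_) (fun p hp => ?_) <;> rw [interior_Icc] at hp
  · exact (hasDerivAt_pinskerDefect (by linarith [hp.1]) (by linarith [hp.2])).hasDerivWithinAt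
  · linarith [four_mul_sub_half_le_log_sub_log hp.1.le hp.2]

lemma pinskerDefect_three_quarters_pos : 0 < pinskerDefect (3 / 4) := by
  have hH : binEntropy (3 / 4) = 2 * log 2 - 3 / 4 * log 3 := by
    have h4 : log 4 = 2 * log 2 := by
      rw [show (4 : ℝ) = 2 ^ 2 by norm_num, log_pow]; push_cast; ring
    rw [binEntropy, show ((3 : ℝ) / 4)⁻¹ = 4 / 3 by norm_num,
      show ((1 : ℝ) - 3 / 4)⁻¹ = 4 by norm_num, log_div (by norm_num) (by norm_num), h4]
    ring
  rw [pinskerDefect, hH]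
  linarith [log_three_gt_d9, log_two_lt_d9]

lemma pinskerDefect_three_quarters_le {p : ℝ} (hp0 : 0 ≤ p) (hp1 : p ≤ 1)
    (hfar : 4⁻¹ ≤ |p - 2⁻¹|) : pinskerDefect (3 / 4) ≤ pinskerDefect p := by
  have key : ∀ q, 3 / 4 ≤ q → q ≤ 1 → pinskerDefect (3 / 4) ≤ pinskerDefect q := fun q hq hq1 =>
    pinskerDefect_monotoneOn ⟨by norm_num, by norm_num⟩ ⟨by linarith, hq1⟩ hq
  rcases le_abs'.mp hfar with h | h
  · rw [← pinskerDefect_one_sub p]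
    exact key (1 - p) (by linarith) (by linarith)
  · exact key _ (by linarith) hp1

lemma choose_mul_pow_mul_pow_le_one {n k : ℕ} (hk : k ≤ n) {p q : ℝ} (hp : 0 ≤ p) (hq : 0 ≤ q)
    (hpq : p + q = 1) : (n.choose k : ℝ) * p ^ k * q ^ (n - k) ≤ 1 := by
  calc (n.choose k : ℝ) * p ^ k * q ^ (n - k) = p ^ k * q ^ (n - k) * n.choose k := by ring
    _ ≤ ∑ j ∈ range (n + 1), p ^ j * q ^ (n - j) * n.choose j :=
      single_le_sum (f := fun j => p ^ j * q ^ (n - j) * (n.choose j : ℝ))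
        (fun j _ => by positivity) (mem_range.mpr (Nat.lt_succ_of_le hk))
    _ = 1 := by rw [← add_pow, hpq, one_pow]

lemma choose_le_exp_mul_binEntropy {n k : ℕ} (hk : k ≤ n) :
    (n.choose k : ℝ) ≤ exp (n * binEntropy (k / n)) := by
  rcases Nat.eq_zero_or_pos k with rfl | hk0
  · simp
  rcases hk.eq_or_lt with rfl | hkn
  · simp [hk0.ne']
  set p : ℝ := k / n
  have hn : (0 : ℝ) < n := by exact_mod_cast hk0.trans hkn
  have hp : 0 < p := by positivity
  have hq : 0 < 1 - p := by
    rw [sub_pos, div_lt_one hn]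
    exact_mod_cast hkn
  have hpow : p ^ k * (1 - p) ^ (n - k) = exp (-(n * binEntropy p)) := by
    have hk' : (k : ℝ) = n * p := by simp only [p]; field_simp
    have hnk : ((n - k : ℕ) : ℝ) = n * (1 - p) := by
      rw [Nat.cast_sub hk]; simp only [p]; field_simp
    rw [← exp_log (pow_pos hp k), ← exp_log (pow_pos hq (n - k)), log_pow, log_pow, ← exp_add,
      hk', hnk, binEntropy, log_inv, log_inv]
    ring_nf
  have := choose_mul_pow_mul_pow_le_one hk hp.le hq.le (add_sub_cancel p 1)
  rw [mul_assoc, hpow, exp_neg, ← div_eq_mul_inv, div_le_one (exp_pos _)] at this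
  exact this

lemma ycw_le {n k : ℕ} (hn : 0 < n) (hk : k ≤ n) :
    ycw n k ≤ sqrt (π * n / 2) * exp (-(n * pinskerDefect (k / n))) := by
  have hn' : (0 : ℝ) < n := by exact_mod_cast hn
  have hsqrt : sqrt (2 / (π * n)) = (sqrt (π * n / 2))⁻¹ := by rw [← sqrt_inv, inv_div]
  have hexp : (2 * (k : ℝ) - n) ^ 2 / (2 * n) = n * (2 * ((k : ℝ) / n - 2⁻¹) ^ 2) := by
    field_simp
  have htwo : (2 : ℝ) ^ n = exp (n * log 2) := by rw [exp_nat_mul, exp_log two_pos]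
  calc ycw n k
      = sqrt (π * n / 2) * ((n.choose k : ℝ) * exp (n * (2 * ((k : ℝ) / n - 2⁻¹) ^ 2 - log 2))) := by
        rw [ycw, hsqrt, hexp, htwo, mul_sub, exp_sub]
        field_simp
    _ ≤ sqrt (π * n / 2) * (exp (n * binEntropy (k / n)) *
          exp (n * (2 * ((k : ℝ) / n - 2⁻¹) ^ 2 - log 2))) := by
        gcongr
        exact choose_le_exp_mul_binEntropy hk
    _ = sqrt (π * n / 2) * exp (-(n * pinskerDefect (k / n))) := by
        rw [← exp_add, pinskerDefect]
        ring_nf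

lemma Ahatcw_le_Acw (n : ℕ) : Ahatcw n ≤ Acw n := by
  refine sum_le_sum_of_subset_of_nonneg
    (monotone_filter_right _ fun k _ h => h.trans (le_abs_self _)) fun k _ _ => ?_
  unfold ycw
  positivity

lemma Acw_le {n : ℕ} (hn : 0 < n) :
    Acw n ≤ (n + 1) * (sqrt (π * n / 2) * exp (-(n * pinskerDefect (3 / 4)))) := by
  have hn' : (0 : ℝ) < n := by exact_mod_cast hn
  have hterm : ∀ k ∈ (range (n + 1)).filter (fun k : ℕ => (n : ℝ) / 4 ≤ |(k : ℝ) - n / 2|),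
      ycw n k ≤ sqrt (π * n / 2) * exp (-(n * pinskerDefect (3 / 4))) := by
    intro k hk
    simp only [mem_filter, mem_range] at hk
    have hkn : k ≤ n := Nat.lt_succ_iff.mp hk.1
    have hfar : 4⁻¹ ≤ |(k : ℝ) / n - 2⁻¹| := by
      rw [show (k : ℝ) / n - 2⁻¹ = ((k : ℝ) - n / 2) / n by field_simp, abs_div, abs_of_pos hn',
        le_div_iff₀ hn']
      linarith [hk.2]
    refine (ycw_le hn hkn).trans ?_
    gcongr
    exact pinskerDefect_three_quarters_le (by positivity)
      ((div_le_one hn').mpr (by exact_mod_cast hkn)) hfar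
  calc Acw n ≤ #((range (n + 1)).filter (fun k : ℕ => (n : ℝ) / 4 ≤ |(k : ℝ) - n / 2|)) •
        (sqrt (π * n / 2) * exp (-(n * pinskerDefect (3 / 4)))) := sum_le_card_nsmul _ _ _ hterm
    _ ≤ (n + 1) * (sqrt (π * n / 2) * exp (-(n * pinskerDefect (3 / 4)))) := by
      rw [nsmul_eq_mul]
      gcongr
      exact_mod_cast (card_filter_le _ _).trans (card_range (n + 1)).le

lemma eventually_succ_mul_sqrt_le_exp {δ : ℝ} (hδ : 0 < δ) :
    ∀ᶠ n : ℕ in atTop, ((n : ℝ) + 1) * sqrt (π * n / 2) ≤ exp (δ * n) := by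
  have hsq := ((isLittleO_pow_exp_pos_mul_atTop 2 hδ).comp_tendsto
    tendsto_natCast_atTop_atTop).def (by norm_num : (0 : ℝ) < 4⁻¹)
  filter_upwards [hsq, eventually_ge_atTop 1] with n hn hn1
  have hn1' : (1 : ℝ) ≤ n := by exact_mod_cast hn1
  simp only [Function.comp, norm_pow, Real.norm_eq_abs, abs_exp, Nat.abs_cast] at hn
  have hsqrt : sqrt (π * n / 2) ≤ 2 * n :=
    sqrt_le_iff.mpr ⟨by positivity, by nlinarith [pi_le_four]⟩
  calc ((n : ℝ) + 1) * sqrt (π * n / 2) ≤ (2 * n) * (2 * n) := by gcongr; linarith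
    _ ≤ exp (δ * n) := by nlinarith

theorem tail_sums_exponentially_small :
    ∃ c : ℝ, 0 < c ∧ ∃ N : ℕ, ∀ n : ℕ, N ≤ n →
      Ahatcw n ≤ Acw n ∧ Acw n ≤ Real.exp (-c * n) := by
  set δ := pinskerDefect (3 / 4)
  have hδ : 0 < δ := pinskerDefect_three_quarters_pos
  obtain ⟨N, hN⟩ := eventually_atTop.mp
    ((eventually_ge_atTop 1).and (eventually_succ_mul_sqrt_le_exp (half_pos hδ)))
  refine ⟨δ / 2, half_pos hδ, N, fun n hn => ⟨Ahatcw_le_Acw n, ?_⟩⟩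
  obtain ⟨hn1, hpoly⟩ := hN n hn
  calc Acw n ≤ (n + 1) * (sqrt (π * n / 2) * exp (-(n * δ))) := Acw_le hn1
    _ = ((n + 1) * sqrt (π * n / 2)) * exp (-(n * δ)) := by ring
    _ ≤ exp (δ / 2 * n) * exp (-(n * δ)) := by gcongr
    _ = exp (-(δ / 2) * n) := by rw [← exp_add]; ring_nf
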